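/- arXiv:1412.8582 — 4 statements merged into one kernel-verified Lean document; each statement's English description precedes it below -/
import Mathlib

section
/- Let G be a group acting transitively on a set X, let φ : G → ℤ be a homomorphism with kernel K, and let x ∈ X. If φ(G_x) ≠ 0 and φ is surjective, then the number of K-orbits in X is finite and equals the index of φ(G_x) in ℤ. -/
/-!
Since `K = ker φ` is normal, `K·G_x` is a subgroup, and by transitivity the `K`-orbits on `X` are
the cosets `G / K·G_x`. As `φ` is surjective, `G / K·G_x ≅ ℤ / φ(G_x)`, and a nonzero subgroup of
`ℤ` has finite index.
-/

namespace MulAction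

variable {G X : Type*} [Group G] [MulAction G X]

theorem orbitRel_smul_smul_iff_inv_mul_mem_sup (N : Subgroup G) [hN : N.Normal] (x : X)
    (g g' : G) : orbitRel N X (g • x) (g' • x) ↔ g⁻¹ * g' ∈ N ⊔ stabilizer G x := by
  rw [orbitRel_apply, mem_orbit_iff, Subgroup.mem_sup_of_normal_left]
  constructor
  · rintro ⟨n, hn⟩
    refine ⟨(g⁻¹ * n * g)⁻¹, N.inv_mem (hN.conj_mem' _ n.2 g), g⁻¹ * n * g', ?_, by group⟩
    rw [mem_stabilizer_iff, mul_smul, mul_smul, ← Subgroup.smul_def, hn, inv_smul_smul]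
  · rintro ⟨m, hm, s, hs, hms⟩
    obtain rfl : g' = g * (m * s) := by rw [hms, mul_inv_cancel_left]
    refine ⟨⟨g * m⁻¹ * g⁻¹, hN.conj_mem _ (N.inv_mem hm) g⟩, ?_⟩
    simp [mul_smul, mem_stabilizer_iff.mp hs]

variable [IsPretransitive G X]

noncomputable def orbitRelQuotientEquivQuotientSup (N : Subgroup G) [N.Normal] (x : X) :
    orbitRel.Quotient N X ≃ G ⧸ (N ⊔ stabilizer G x) :=
  ((Quotient.congrRight fun g g' => by
      rw [QuotientGroup.leftRel_apply, Setoid.ker_def, Quotient.eq,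
        orbitRel_smul_smul_iff_inv_mul_mem_sup]).trans
    (Setoid.quotientKerEquivOfSurjective (fun g : G => (⟦g • x⟧ : orbitRel.Quotient N X))
      (Quotient.mk_surjective.comp (surjective_smul G x)))).symm

theorem nat_card_orbitRel_quotient (N : Subgroup G) [N.Normal] (x : X) :
    Nat.card (orbitRel.Quotient N X) = (N ⊔ stabilizer G x).index :=
  Nat.card_congr (orbitRelQuotientEquivQuotientSup N x)

end MulAction

theorem Subgroup.index_ne_zero_of_ne_bot_int {H : Subgroup (Multiplicative ℤ)} (hH : H ≠ ⊥) :
    H.index ≠ 0 := by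
  obtain ⟨⟨a, ha⟩, ha1⟩ := Subgroup.ne_bot_iff_exists_ne_one.mp hH
  have : (zpowers a).index = a.toAdd.natAbs := Int.index_zmultiples a.toAdd
  refine ne_zero_of_dvd_ne_zero ?_ (index_dvd_of_le (zpowers_le.mpr ha))
  simpa [this] using ha1

/-- If `G` acts transitively on `X`, `φ : G → ℤ` is a surjective homomorphism
with kernel `K`, and `φ` does not vanish on the stabilizer of `x`, then the
number of `K`-orbits in `X` is finite and equals the index of `φ(G_x)` in `ℤ`. -/
theorem stmt_2 {G X : Type*} [Group G] [MulAction G X]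
    (htrans : MulAction.IsPretransitive G X)
    (φ : G →* Multiplicative ℤ) (hsurj : Function.Surjective φ) (x : X)
    (hx : (MulAction.stabilizer G x).map φ ≠ ⊥) :
    Finite (MulAction.orbitRel.Quotient φ.ker X) ∧
      Nat.card (MulAction.orbitRel.Quotient φ.ker X) =
        ((MulAction.stabilizer G x).map φ).index := by
  have hcard : Nat.card (MulAction.orbitRel.Quotient φ.ker X) =
      ((MulAction.stabilizer G x).map φ).index := by
    rw [MulAction.nat_card_orbitRel_quotient, Subgroup.index_map,
      φ.range_eq_top_of_surjective hsurj, Subgroup.index_top, mul_one, sup_comm]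
  exact ⟨Nat.finite_of_card_ne_zero (hcard ▸ Subgroup.index_ne_zero_of_ne_bot_int hx), hcard⟩
end

section
/- Let G = F_n × ℤ with F_n free on x_1,…,x_n and ℤ generated by z. Let p, q be coprime positive integers and define φ : G → ℤ by φ(x_i) = p for all i and φ(z) = q. Then φ is surjective, the projection G → F_n is injective on ker φ, and its image is the set of elements of F_n whose total exponent sum is divisible by q; consequently ker φ is free of rank q(n−1)+1. -/
/-!
Write `σ` for the exponent sum, so that `φ (w, t) = p σ(w) + q t`. As `q ≠ 0` and `gcd(p, q) = 1`,
an element `(w, t)` of `ker φ` is determined by `w`, and the possible `w` are exactly those with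
`q ∣ σ(w)`; so `ker φ` is isomorphic to the index-`q` subgroup `K = σ⁻¹(qℤ)` of `F_n`.

Fix a letter `x₀`. For the transversal `1, x₀, …, x₀^(q-1)`, `K` is free on the Schreier
generators `x₀ⁱ a x₀^-(i+1)` (`0 ≤ i < q`, `a ≠ x₀`) and `x₀^q`, which gives the rank `q(n-1)+1`.
They generate `K`: the subgroup they generate is normalized by `x₀` and contains `a x₀⁻¹` for
every letter `a`, hence contains `w x₀^-σ(w)` for every `w`. They are free: on the free group `B`
on letters `bᵢₐ, c`, the shift `bᵢₐ ↦ bᵢ₊₁,ₐ`, wrapping around to `c b₀ₐ c⁻¹`, is an automorphism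
`β` with `β^q` conjugation by `c`. The map `F_n → B ⋊_β ℤ`, `x₀ ↦ t`, `a ↦ b₀ₐ t` sends the image
of `x ∈ B` to `x (c⁻¹ t^q)^(#c x)`, and this is injective in `x` because `c⁻¹ t^q` centralizes `B`.
-/

lemma ZMod.val_add_one_of_ne_zero {q : ℕ} [NeZero q] {i : ZMod q} (h : i + 1 ≠ 0) :
    (i + 1).val = i.val + 1 := by
  have hi : i + 1 = ((i.val + 1 : ℕ) : ZMod q) := by push_cast [ZMod.natCast_zmod_val]; rfl
  have hlt : i.val + 1 < q :=
    Nat.lt_of_le_of_ne (ZMod.val_lt i) fun heq => h (by rw [hi, heq, ZMod.natCast_self])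
  rw [hi, ZMod.val_cast_of_lt hlt]

lemma ZMod.val_add_one_of_eq_zero {q : ℕ} [NeZero q] {i : ZMod q} (h : i + 1 = 0) :
    i.val + 1 = q := by
  have hdvd : q ∣ i.val + 1 := by
    rw [← ZMod.natCast_eq_zero_iff]
    push_cast [ZMod.natCast_zmod_val]
    exact h
  exact le_antisymm (ZMod.val_lt i) (Nat.le_of_dvd i.val.succ_pos hdvd)

open Multiplicative

namespace ExpSumKernel

section Weight

variable {G : Type*} [Group G] (s : G →* Multiplicative ℤ) (p q : ℤ)

def dvdSubgroup : Subgroup G := (AddSubgroup.zmultiples q).toSubgroup.comap s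

lemma mem_dvdSubgroup {g : G} : g ∈ dvdSubgroup s q ↔ q ∣ (s g).toAdd := by
  simp [dvdSubgroup, Int.mem_zmultiples_iff]

def weightHom : G × Multiplicative ℤ →* Multiplicative ℤ :=
  ((zpowGroupHom p).comp s).coprod (zpowGroupHom q)

lemma toAdd_weightHom (x : G × Multiplicative ℤ) :
    (weightHom s p q x).toAdd = p * (s x.1).toAdd + q * x.2.toAdd := by
  simp only [weightHom, MonoidHom.coprod_apply, MonoidHom.comp_apply, zpowGroupHom_apply,
    toAdd_mul, toAdd_zpow, smul_eq_mul]

lemma mem_ker_weightHom {x : G × Multiplicative ℤ} :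
    x ∈ (weightHom s p q).ker ↔ p * (s x.1).toAdd + q * x.2.toAdd = 0 := by
  rw [MonoidHom.mem_ker, ← toAdd_weightHom, toAdd_eq_zero]

variable {s p q}

lemma weightHom_surjective (hs : Function.Surjective s) (hpq : IsCoprime p q) :
    Function.Surjective (weightHom s p q) := by
  obtain ⟨u, v, huv⟩ := hpq
  intro t
  obtain ⟨g, hg⟩ := hs (ofAdd (u * t.toAdd))
  refine ⟨(g, ofAdd (v * t.toAdd)), toAdd.injective ?_⟩
  rw [toAdd_weightHom, hg, toAdd_ofAdd, toAdd_ofAdd]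
  linear_combination t.toAdd * huv

lemma fst_ker_weightHom_injective (hq : q ≠ 0) :
    Function.Injective (fun x : (weightHom s p q).ker => (x : G × Multiplicative ℤ).1) := by
  rintro ⟨⟨g, t⟩, h⟩ ⟨⟨g', t'⟩, h'⟩ (rfl : g = g')
  rw [mem_ker_weightHom] at h h'
  have : t.toAdd = t'.toAdd := mul_left_cancel₀ hq (by linarith)
  exact Subtype.ext (Prod.ext rfl (toAdd.injective this))

lemma range_fst_ker_weightHom (hpq : IsCoprime p q) :
    Set.range (fun x : (weightHom s p q).ker => (x : G × Multiplicative ℤ).1) =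
      {g | q ∣ (s g).toAdd} := by
  ext g
  constructor
  · rintro ⟨⟨⟨g, t⟩, h⟩, rfl⟩
    rw [mem_ker_weightHom] at h
    exact hpq.symm.dvd_of_dvd_mul_left ⟨-t.toAdd, by linarith⟩
  · rintro ⟨d, hd⟩
    refine ⟨⟨(g, ofAdd (-(p * d))), (mem_ker_weightHom ..).2 ?_⟩, rfl⟩
    rw [hd, toAdd_ofAdd]
    ring

noncomputable def kerWeightHomEquiv (hq : q ≠ 0) (hpq : IsCoprime p q) :
    (weightHom s p q).ker ≃* dvdSubgroup s q :=
  (MonoidHom.ofInjective (f := (MonoidHom.fst G _).comp (weightHom s p q).ker.subtype)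
    (fst_ker_weightHom_injective hq)).trans <| MulEquiv.subgroupCongr <| SetLike.coe_injective <| by
      rw [MonoidHom.coe_range]
      exact (range_fst_ker_weightHom hpq).trans (Set.ext fun _ => (mem_dvdSubgroup ..).symm)

end Weight

section ExponentSum

variable (α : Type*)

def exponentSum : FreeGroup α →* Multiplicative ℤ := FreeGroup.lift fun _ => ofAdd 1

variable {α}

lemma lift_const_ofAdd (k : ℤ) :
    FreeGroup.lift (fun _ : α => ofAdd k) = (zpowGroupHom k).comp (exponentSum α) := by
  ext a
  simp [exponentSum, ← ofAdd_zsmul]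

@[simp] lemma exponentSum_of (a : α) : exponentSum α (.of a) = ofAdd 1 := FreeGroup.lift_apply_of

lemma exponentSum_of_zpow (a : α) (k : ℤ) : exponentSum α (.of a ^ k) = ofAdd k := by
  simp [exponentSum, ← ofAdd_zsmul]

lemma exponentSum_surjective [Nonempty α] : Function.Surjective (exponentSum α) :=
  fun t => ⟨.of (Classical.arbitrary α) ^ t.toAdd, exponentSum_of_zpow _ _⟩

end ExponentSum

abbrev SchreierGroup {α : Type*} (a₀ : α) (q : ℕ) := FreeGroup ((ZMod q × {a // a ≠ a₀}) ⊕ Unit)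

namespace SchreierGroup

open FreeGroup (of)

variable {α : Type*} {a₀ : α} {q : ℕ}

def b (i : ZMod q) (a : {a // a ≠ a₀}) : SchreierGroup a₀ q := of (.inl (i, a))

variable (a₀ q)

def c : SchreierGroup a₀ q := of (.inr ())

def toFreeGroup : SchreierGroup a₀ q →* FreeGroup α :=
  FreeGroup.lift <| Sum.elim
    (fun ia => of a₀ ^ ia.1.val * (of ia.2.1 * (of a₀)⁻¹) * (of a₀ ^ ia.1.val)⁻¹)
    fun _ => of a₀ ^ q

def cCount : SchreierGroup a₀ q →* Multiplicative ℤ :=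
  FreeGroup.lift <| Sum.elim 1 fun _ => ofAdd 1

def shiftHom : SchreierGroup a₀ q →* SchreierGroup a₀ q :=
  FreeGroup.lift <| Sum.elim
    (fun ia => if ia.1 + 1 = 0 then c a₀ q * b 0 ia.2 * (c a₀ q)⁻¹ else b (ia.1 + 1) ia.2)
    fun _ => c a₀ q

def shiftInvHom : SchreierGroup a₀ q →* SchreierGroup a₀ q :=
  FreeGroup.lift <| Sum.elim
    (fun ia => if ia.1 = 0 then (c a₀ q)⁻¹ * b (-1) ia.2 * c a₀ q else b (ia.1 - 1) ia.2)
    fun _ => c a₀ q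

@[simp] lemma toFreeGroup_c : toFreeGroup a₀ q (c a₀ q) = of a₀ ^ q := FreeGroup.lift_apply_of

@[simp] lemma cCount_c : cCount a₀ q (c a₀ q) = ofAdd 1 := FreeGroup.lift_apply_of

lemma shiftHom_c : shiftHom a₀ q (c a₀ q) = c a₀ q := FreeGroup.lift_apply_of

lemma shiftInvHom_c : shiftInvHom a₀ q (c a₀ q) = c a₀ q := FreeGroup.lift_apply_of

variable {a₀ q}

@[simp] lemma toFreeGroup_b (i : ZMod q) (a : {a // a ≠ a₀}) :
    toFreeGroup a₀ q (b i a) = of a₀ ^ i.val * (of a.1 * (of a₀)⁻¹) * (of a₀ ^ i.val)⁻¹ :=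
  FreeGroup.lift_apply_of

@[simp] lemma cCount_b (i : ZMod q) (a : {a // a ≠ a₀}) : cCount a₀ q (b i a) = 1 :=
  FreeGroup.lift_apply_of

lemma shiftHom_b (i : ZMod q) (a : {a // a ≠ a₀}) :
    shiftHom a₀ q (b i a) = if i + 1 = 0 then c a₀ q * b 0 a * (c a₀ q)⁻¹ else b (i + 1) a :=
  FreeGroup.lift_apply_of

lemma shiftInvHom_b (i : ZMod q) (a : {a // a ≠ a₀}) :
    shiftInvHom a₀ q (b i a) = if i = 0 then (c a₀ q)⁻¹ * b (-1) a * c a₀ q else b (i - 1) a :=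
  FreeGroup.lift_apply_of

lemma exponentSum_toFreeGroup (x : SchreierGroup a₀ q) :
    exponentSum α (toFreeGroup a₀ q x) = cCount a₀ q x ^ (q : ℤ) := by
  suffices (exponentSum α).comp (toFreeGroup a₀ q) = (zpowGroupHom (q : ℤ)).comp (cCount a₀ q)
    from DFunLike.congr_fun this x
  refine FreeGroup.ext_hom _ _ ?_
  rintro (⟨i, a⟩ | ⟨⟩)
  · change exponentSum α (toFreeGroup a₀ q (b i a)) = cCount a₀ q (b i a) ^ (q : ℤ)
    simp
  · change exponentSum α (toFreeGroup a₀ q (c a₀ q)) = cCount a₀ q (c a₀ q) ^ (q : ℤ)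
    simp

lemma shiftInvHom_comp_shiftHom :
    (shiftInvHom a₀ q).comp (shiftHom a₀ q) = MonoidHom.id _ := by
  refine FreeGroup.ext_hom _ _ ?_
  rintro (⟨i, a⟩ | ⟨⟩)
  · change shiftInvHom a₀ q (shiftHom a₀ q (b i a)) = b i a
    by_cases h : i + 1 = 0
    · rw [shiftHom_b, if_pos h, map_mul, map_mul, map_inv, shiftInvHom_c, shiftInvHom_b,
        if_pos rfl, eq_neg_of_add_eq_zero_left h]
      group
    · rw [shiftHom_b, if_neg h, shiftInvHom_b, if_neg h, add_sub_cancel_right]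
  · exact (congrArg _ (shiftHom_c a₀ q)).trans (shiftInvHom_c a₀ q)

lemma shiftHom_comp_shiftInvHom :
    (shiftHom a₀ q).comp (shiftInvHom a₀ q) = MonoidHom.id _ := by
  refine FreeGroup.ext_hom _ _ ?_
  rintro (⟨i, a⟩ | ⟨⟩)
  · change shiftHom a₀ q (shiftInvHom a₀ q (b i a)) = b i a
    by_cases h : i = 0
    · rw [shiftInvHom_b, if_pos h, map_mul, map_mul, map_inv, shiftHom_c, shiftHom_b,
        if_pos (neg_add_cancel 1), h]
      group
    · rw [shiftInvHom_b, if_neg h, shiftHom_b, sub_add_cancel, if_neg h]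
  · exact (congrArg _ (shiftInvHom_c a₀ q)).trans (shiftHom_c a₀ q)

variable (a₀ q) in
def shift : MulAut (SchreierGroup a₀ q) :=
  (shiftHom a₀ q).toMulEquiv (shiftInvHom a₀ q) shiftInvHom_comp_shiftHom
    shiftHom_comp_shiftInvHom

@[simp] lemma shift_b (i : ZMod q) (a : {a // a ≠ a₀}) :
    shift a₀ q (b i a) = if i + 1 = 0 then c a₀ q * b 0 a * (c a₀ q)⁻¹ else b (i + 1) a :=
  shiftHom_b i a

@[simp] lemma shift_c : shift a₀ q (c a₀ q) = c a₀ q := shiftHom_c a₀ q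

lemma shift_pow_c (k : ℕ) : (shift a₀ q ^ k) (c a₀ q) = c a₀ q := by
  induction k with
  | zero => rfl
  | succ k ih => rw [pow_succ', MulAut.mul_apply, ih, shift_c]

lemma shift_pow_b_zero {k : ℕ} (hk : k < q) (a : {a // a ≠ a₀}) :
    (shift a₀ q ^ k) (b 0 a) = b (k : ZMod q) a := by
  induction k with
  | zero => simp
  | succ k ih =>
    have hk' : (k : ZMod q) + 1 ≠ 0 := by
      rw [← Nat.cast_succ, Ne, ZMod.natCast_eq_zero_iff]
      exact Nat.not_dvd_of_pos_of_lt k.succ_pos hk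
    rw [pow_succ', MulAut.mul_apply, ih (by omega), shift_b, if_neg hk', Nat.cast_succ]

open SemidirectProduct (inl inr rightHom)

variable (a₀ q) in
abbrev ShiftExt := SchreierGroup a₀ q ⋊[zpowersHom _ (shift a₀ q)] Multiplicative ℤ

lemma inr_mul_inl (k : ℕ) (x : SchreierGroup a₀ q) :
    (inr (ofAdd (k : ℤ)) : ShiftExt a₀ q) * inl x =
      inl ((shift a₀ q ^ k) x) * inr (ofAdd (k : ℤ)) := by
  have h := SemidirectProduct.inl_aut (φ := zpowersHom _ (shift a₀ q)) (ofAdd (k : ℤ)) x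
  rw [zpowersHom_apply, toAdd_ofAdd, zpow_natCast] at h
  rw [h, map_inv, inv_mul_cancel_right]

variable (a₀ q) in
def toExt [DecidableEq α] : FreeGroup α →* ShiftExt a₀ q :=
  FreeGroup.lift fun a => (if h : a = a₀ then 1 else inl (b 0 ⟨a, h⟩)) * inr (ofAdd 1)

lemma toExt_of_zpow_self [DecidableEq α] (k : ℤ) : toExt a₀ q (of a₀ ^ k) = inr (ofAdd k) := by
  rw [map_zpow, toExt, FreeGroup.lift_apply_of, dif_pos rfl, one_mul, ← map_zpow, ← ofAdd_zsmul,
    smul_eq_mul, mul_one]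

lemma toExt_of_mul_inv [DecidableEq α] (a : {a // a ≠ a₀}) :
    toExt a₀ q (of a.1 * (of a₀)⁻¹) = inl (b 0 a) := by
  simp [toExt, a.2]

variable [NeZero q]

lemma shift_pow_val (i : ZMod q) (a : {a // a ≠ a₀}) :
    (shift a₀ q ^ i.val) (b 0 a) = b i a := by
  rw [shift_pow_b_zero (ZMod.val_lt i), ZMod.natCast_zmod_val]

lemma shift_pow_q : shift a₀ q ^ q = MulAut.conj (c a₀ q) := by
  refine MulEquiv.toMonoidHom_injective <| FreeGroup.ext_hom _ _ ?_
  rintro (⟨i, a⟩ | ⟨⟩)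
  · change (shift a₀ q ^ q) (b i a) = MulAut.conj (c a₀ q) (b i a)
    have h0 : (shift a₀ q ^ q) (b 0 a) = c a₀ q * b 0 a * (c a₀ q)⁻¹ := calc
      (shift a₀ q ^ q) (b 0 a) = shift a₀ q ((shift a₀ q ^ (q - 1)) (b 0 a)) := by
        rw [← MulAut.mul_apply, ← pow_succ', Nat.sub_add_cancel NeZero.one_le]
      _ = c a₀ q * b 0 a * (c a₀ q)⁻¹ := by
        rw [shift_pow_b_zero (Nat.sub_lt (NeZero.pos q) one_pos), shift_b, if_pos]
        rw [← Nat.cast_add_one, Nat.sub_add_cancel NeZero.one_le, ZMod.natCast_self]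
    rw [← shift_pow_val, ← MulAut.mul_apply, ← pow_mul_comm, MulAut.mul_apply, h0, map_mul,
      map_mul, map_inv, shift_pow_c, shift_pow_val, MulAut.conj_apply]
  · change (shift a₀ q ^ q) (c a₀ q) = MulAut.conj (c a₀ q) (c a₀ q)
    rw [shift_pow_c, MulAut.conj_apply, mul_inv_cancel_right]

lemma toFreeGroup_shift (x : SchreierGroup a₀ q) :
    toFreeGroup a₀ q (shift a₀ q x) = of a₀ * toFreeGroup a₀ q x * (of a₀)⁻¹ := by
  suffices (toFreeGroup a₀ q).comp (shift a₀ q).toMonoidHom =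
      (MulAut.conj (of a₀)).toMonoidHom.comp (toFreeGroup a₀ q) from
    DFunLike.congr_fun this x
  refine FreeGroup.ext_hom _ _ ?_
  rintro (⟨i, a⟩ | ⟨⟩)
  · change toFreeGroup a₀ q (shift a₀ q (b i a)) = of a₀ * toFreeGroup a₀ q (b i a) * (of a₀)⁻¹
    rw [shift_b]
    split_ifs with h
    · simp only [map_mul, map_inv, toFreeGroup_b, toFreeGroup_c, ZMod.val_zero, pow_zero,
        ← ZMod.val_add_one_of_eq_zero h, pow_succ']
      group
    · rw [toFreeGroup_b, toFreeGroup_b, ZMod.val_add_one_of_ne_zero h, pow_succ']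
      group
  · change toFreeGroup a₀ q (shift a₀ q (c a₀ q)) =
      of a₀ * toFreeGroup a₀ q (c a₀ q) * (of a₀)⁻¹
    rw [shift_c, toFreeGroup_c, ← pow_succ', pow_succ, mul_inv_cancel_right]

lemma of_mem_normalizer_range_toFreeGroup :
    of a₀ ∈ Subgroup.normalizer (toFreeGroup a₀ q).range := by
  refine Subgroup.mem_normalizer_iff.2 fun w => ⟨?_, ?_⟩
  · rintro ⟨x, rfl⟩
    exact ⟨shift a₀ q x, toFreeGroup_shift x⟩
  · rintro ⟨x, hx⟩
    refine ⟨(shift a₀ q).symm x, ?_⟩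
    simpa [hx, eq_comm] using toFreeGroup_shift ((shift a₀ q).symm x)

lemma mul_zpow_neg_exponentSum_mem_range (w : FreeGroup α) :
    w * of a₀ ^ (-(exponentSum α w).toAdd) ∈ (toFreeGroup a₀ q).range := by
  have hconj (k : ℤ) {u : FreeGroup α} (hu : u ∈ (toFreeGroup a₀ q).range) :
      of a₀ ^ k * u * (of a₀ ^ k)⁻¹ ∈ (toFreeGroup a₀ q).range :=
    (Subgroup.mem_normalizer_iff.1 (zpow_mem of_mem_normalizer_range_toFreeGroup k) u).1 hu
  induction w using FreeGroup.induction_on with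
  | C1 => simp
  | of a =>
    by_cases ha : a = a₀
    · subst ha
      simp
    · exact ⟨b 0 ⟨a, ha⟩, by simp⟩
  | inv_of a ha =>
    convert hconj (-(exponentSum α (of a)).toAdd) (inv_mem ha) using 1
    simp only [map_inv, toAdd_inv, neg_neg]
    group
  | mul u v hu hv =>
    convert mul_mem hu (hconj (exponentSum α u).toAdd hv) using 1
    simp only [map_mul, toAdd_mul, neg_add]
    group

lemma range_toFreeGroup : (toFreeGroup a₀ q).range = dvdSubgroup (exponentSum α) q := by
  refine le_antisymm ?_ fun w hw => ?_
  · rintro _ ⟨x, rfl⟩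
    simp [mem_dvdSubgroup, exponentSum_toFreeGroup]
  · obtain ⟨d, hd⟩ := (mem_dvdSubgroup ..).1 hw
    have hw' : w = w * of a₀ ^ (-(exponentSum α w).toAdd) * toFreeGroup a₀ q (c a₀ q ^ d) := by
      rw [map_zpow, toFreeGroup_c, ← zpow_natCast, ← zpow_mul, ← hd, zpow_neg,
        inv_mul_cancel_right]
    rw [hw']
    exact mul_mem (mul_zpow_neg_exponentSum_mem_range w) ⟨_, rfl⟩

variable (a₀ q) in
def z : ShiftExt a₀ q := inl (c a₀ q)⁻¹ * inr (ofAdd (q : ℤ))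

lemma commute_z_inl (x : SchreierGroup a₀ q) : Commute (z a₀ q) (inl x) := by
  have h := inr_mul_inl q x
  rw [shift_pow_q, MulAut.conj_apply] at h
  calc z a₀ q * inl x = inl (c a₀ q)⁻¹ * (inr (ofAdd (q : ℤ)) * inl x) := mul_assoc ..
    _ = inl ((c a₀ q)⁻¹ * (c a₀ q * x * (c a₀ q)⁻¹)) * inr (ofAdd (q : ℤ)) := by
      rw [h, ← mul_assoc, ← map_mul]
    _ = inl (x * (c a₀ q)⁻¹) * inr (ofAdd (q : ℤ)) := by
      congr 2
      group
    _ = inl x * z a₀ q := by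
      rw [map_mul, z, mul_assoc]

variable (a₀ q) in
def embed : SchreierGroup a₀ q →* ShiftExt a₀ q :=
  (MonoidHom.noncommCoprod inl (zpowersHom _ (z a₀ q))
    fun x _ => ((commute_z_inl x).zpow_left _).symm).comp ((MonoidHom.id _).prod (cCount a₀ q))

lemma embed_apply (x : SchreierGroup a₀ q) :
    embed a₀ q x = inl x * z a₀ q ^ (cCount a₀ q x).toAdd := rfl

lemma embed_injective : Function.Injective (embed a₀ q) := by
  refine (injective_iff_map_eq_one _).2 fun x hx => ?_
  have hk : (cCount a₀ q x).toAdd = 0 := by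
    have h := congrArg rightHom hx
    rw [embed_apply, z, map_mul, map_zpow, map_mul, SemidirectProduct.rightHom_inl,
      SemidirectProduct.rightHom_inl, SemidirectProduct.rightHom_inr, one_mul, one_mul,
      map_one] at h
    simpa [NeZero.ne q] using congrArg toAdd h
  rw [embed_apply, hk, zpow_zero, mul_one] at hx
  exact SemidirectProduct.inl_injective (hx.trans (map_one _).symm)

lemma toExt_comp_toFreeGroup [DecidableEq α] :
    (toExt a₀ q).comp (toFreeGroup a₀ q) = embed a₀ q := by
  refine FreeGroup.ext_hom _ _ ?_
  rintro (⟨i, a⟩ | ⟨⟩)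
  · change toExt a₀ q (toFreeGroup a₀ q (b i a)) = embed a₀ q (b i a)
    rw [toFreeGroup_b, map_mul, map_mul, map_inv, ← zpow_natCast, toExt_of_zpow_self,
      toExt_of_mul_inv, inr_mul_inl, mul_inv_cancel_right, shift_pow_val, embed_apply, cCount_b,
      toAdd_one, zpow_zero, mul_one]
  · change toExt a₀ q (toFreeGroup a₀ q (c a₀ q)) = embed a₀ q (c a₀ q)
    rw [toFreeGroup_c, ← zpow_natCast, toExt_of_zpow_self, embed_apply, cCount_c, toAdd_ofAdd,
      zpow_one, z, ← mul_assoc, ← map_mul, mul_inv_cancel, map_one, one_mul]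

lemma toFreeGroup_injective : Function.Injective (toFreeGroup a₀ q) := by
  classical
  refine Function.Injective.of_comp (f := toExt a₀ q) ?_
  rw [← MonoidHom.coe_comp, toExt_comp_toFreeGroup]
  exact embed_injective

variable (a₀ q) in
noncomputable def dvdSubgroupEquiv : dvdSubgroup (exponentSum α) q ≃* SchreierGroup a₀ q :=
  ((MonoidHom.ofInjective toFreeGroup_injective).trans
    (MulEquiv.subgroupCongr range_toFreeGroup)).symm

end SchreierGroup

end ExpSumKernel

open ExpSumKernel

theorem stmt_9_general (n p q : ℕ) (hn : 1 ≤ n) (hq : 0 < q)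
    (hpq : Nat.Coprime p q)
    (φ : FreeGroup (Fin n) × Multiplicative ℤ →* Multiplicative ℤ)
    (hφ : φ = MonoidHom.coprod (FreeGroup.lift fun _ => Multiplicative.ofAdd (p : ℤ))
      (zpowGroupHom (q : ℤ))) :
    Function.Surjective φ ∧
    Function.Injective (fun g : φ.ker => (g : FreeGroup (Fin n) × Multiplicative ℤ).1) ∧
    Set.range (fun g : φ.ker => (g : FreeGroup (Fin n) × Multiplicative ℤ).1) =
      {w : FreeGroup (Fin n) |
        (q : ℤ) ∣ Multiplicative.toAdd
          ((FreeGroup.lift fun _ => Multiplicative.ofAdd (1 : ℤ)) w)} ∧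
    Nonempty (φ.ker ≃* FreeGroup (Fin (q * (n - 1) + 1))) := by
  have : NeZero n := ⟨by omega⟩
  have : NeZero q := ⟨hq.ne'⟩
  have hq' : (q : ℤ) ≠ 0 := Int.natCast_ne_zero.2 hq.ne'
  have hpq' : IsCoprime (p : ℤ) q := Nat.isCoprime_iff_coprime.2 hpq
  rw [lift_const_ofAdd] at hφ
  subst hφ
  refine ⟨weightHom_surjective exponentSum_surjective hpq',
    fst_ker_weightHom_injective hq', range_fst_ker_weightHom hpq',
    ⟨(kerWeightHomEquiv hq' hpq').trans <| (SchreierGroup.dvdSubgroupEquiv 0 q).trans <|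
      FreeGroup.freeGroupCongr <| Fintype.equivFinOfCardEq ?_⟩⟩
  simp [ZMod.card]

/-- Let `G = F_n × ℤ`, `p, q` coprime positive integers, and
`φ : G → ℤ` be given by `φ(xᵢ) = p` and `φ(z) = q`. Then `φ` is surjective,
projection to `F_n` is injective on `ker φ`, its image is the set of elements
of `F_n` whose total exponent sum is divisible by `q`, and `ker φ` is free of
rank `q(n−1)+1`. -/
theorem stmt_9 (n p q : ℕ) (hn : 1 ≤ n) (hp : 0 < p) (hq : 0 < q)
    (hpq : Nat.Coprime p q)
    (φ : FreeGroup (Fin n) × Multiplicative ℤ →* Multiplicative ℤ)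
    (hφ : φ = MonoidHom.coprod (FreeGroup.lift fun _ => Multiplicative.ofAdd (p : ℤ))
      (zpowGroupHom (q : ℤ))) :
    Function.Surjective φ ∧
    Function.Injective (fun g : φ.ker => (g : FreeGroup (Fin n) × Multiplicative ℤ).1) ∧
    Set.range (fun g : φ.ker => (g : FreeGroup (Fin n) × Multiplicative ℤ).1) =
      {w : FreeGroup (Fin n) |
        (q : ℤ) ∣ Multiplicative.toAdd
          ((FreeGroup.lift fun _ => Multiplicative.ofAdd (1 : ℤ)) w)} ∧
    Nonempty (φ.ker ≃* FreeGroup (Fin (q * (n - 1) + 1))) :=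
  stmt_9_general n p q hn hq hpq φ hφ
end

section
/- Let G = F_n × ℤ with n ≥ 1, let z generate the ℤ factor, and let φ : G → ℤ be a surjective homomorphism with φ(z) ≠ 0. Then ker φ is a finitely generated free group; moreover if φ(z) = 0 and n ≥ 2 then ker φ is not finitely generated. -/
/-!
If `d = φ z ≠ 0`, the projection to `F_n` is injective on `ker φ`, and its image contains every
`g` with `φ (g, 1) ∈ dℤ`, a subgroup of finite index; by Nielsen–Schreier and Schreier's lemma
the kernel is free of finite rank.

If `φ z = 0`, then `φ` factors through `ψ = φ|F_n`. Lift `ψ` to `Φ : F_n → ℤ ≀ ℤ`; on `ker ψ`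
the base coordinate of `Φ` is a homomorphism to `ℤ[ℤ]` turning conjugation by `t` (with
`ψ t = 1`) into the shift. A finitely generated kernel would have all these images supported in
one finite set, but conjugating by powers of `t` moves a nonzero image arbitrarily far. For
`n ≥ 2` a suitable lift and kernel element exist: a generator in `ker ψ`, or a commutator.
-/

open Multiplicative SemidirectProduct

theorem Finsupp.exists_finset_forall_support_subset_of_fg {G ι M : Type*} [Group G] [Group.FG G]
    [AddCommGroup M] (f : G →* Multiplicative (ι →₀ M)) :
    ∃ s : Finset ι, ∀ g, (toAdd (f g)).support ⊆ s := by
  classical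
  obtain ⟨S, hS⟩ := Group.FG.out (G := G)
  refine ⟨S.biUnion fun g ↦ (toAdd (f g)).support, fun g ↦ ?_⟩
  induction (hS ▸ Subgroup.mem_top g : g ∈ Subgroup.closure (S : Set G))
    using Subgroup.closure_induction with
  | mem x hx => exact Finset.subset_biUnion_of_mem (fun g ↦ (toAdd (f g)).support) hx
  | one => simp
  | mul x y _ _ hx hy => simpa using Finsupp.support_add.trans (Finset.union_subset hx hy)
  | inv x _ hx => simpa using hx

theorem FreeGroup.finite_of_fg {α : Type*} [Group.FG (FreeGroup α)] : Finite α := by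
  obtain ⟨s, hs⟩ := Finsupp.exists_finset_forall_support_subset_of_fg
    (FreeGroup.lift fun a : α ↦ ofAdd (Finsupp.single a (1 : ℤ)))
  refine Finite.of_injective (β := s) (fun a ↦ ⟨a, hs (of a) ?_⟩) fun a b h ↦ by simpa using h
  simp

theorem IsFreeGroup.exists_mulEquiv_freeGroup_fin (H : Type*) [Group H] [IsFreeGroup H]
    [Group.FG H] : ∃ m : ℕ, Nonempty (H ≃* FreeGroup (Fin m)) := by
  have : Group.FG (FreeGroup (Generators H)) :=
    Group.fg_of_surjective (f := (toFreeGroup H).toMonoidHom) (toFreeGroup H).surjective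
  have := FreeGroup.finite_of_fg (α := Generators H)
  have := Fintype.ofFinite (Generators H)
  exact ⟨_, ⟨(toFreeGroup H).trans (FreeGroup.freeGroupCongr (Fintype.equivFin _))⟩⟩

section ProdInt

variable {G : Type*} [Group G] (φ : G × Multiplicative ℤ →* Multiplicative ℤ)

theorem map_mk_eq_mul_zpow (g : G) (w : Multiplicative ℤ) :
    φ (g, w) = φ (g, 1) * φ (1, ofAdd 1) ^ toAdd w := by
  have h := (φ.comp (MonoidHom.inr _ _)).apply_mint _ w
  simp only [MonoidHom.comp_apply, MonoidHom.inr_apply] at h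
  rw [← h, ← map_mul, Prod.mk_mul_mk, mul_one, one_mul]

theorem eq_comp_fst_of_map_one_ofAdd_one (hz : φ (1, ofAdd 1) = 1) :
    φ = (φ.comp (MonoidHom.inl _ _)).comp (MonoidHom.fst _ _) := by
  ext ⟨g, w⟩
  simp [map_mk_eq_mul_zpow φ g w, hz]

theorem injective_fst_comp_ker_subtype (hz : φ (1, ofAdd 1) ≠ 1) :
    Function.Injective ((MonoidHom.fst G _).comp φ.ker.subtype) := by
  rw [injective_iff_map_eq_one]
  rintro ⟨⟨g, w⟩, hgw⟩ (rfl : g = 1)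
  rw [MonoidHom.mem_ker, map_mk_eq_mul_zpow] at hgw
  have : w = 1 ∨ φ (1, ofAdd 1) = 1 := by simpa [← Prod.one_eq_mk] using congrArg toAdd hgw
  obtain rfl := this.resolve_right hz
  rfl

theorem finiteIndex_range_fst_comp_ker_subtype (hz : φ (1, ofAdd 1) ≠ 1) :
    ((MonoidHom.fst G _).comp φ.ker.subtype).range.FiniteIndex := by
  set d := toAdd (φ (1, ofAdd 1)) with hd
  have : NeZero d.natAbs := ⟨Int.natAbs_ne_zero.mpr (toAdd_eq_zero.not.mpr hz)⟩
  let χ := (Int.castAddHom (ZMod d.natAbs)).toMultiplicative.comp (φ.comp (MonoidHom.inl _ _))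
  refine Subgroup.finiteIndex_of_le (H := χ.ker) fun g hg ↦ ?_
  obtain ⟨k, hk⟩ : d ∣ toAdd (φ (g, 1)) := by
    rw [← Int.natAbs_dvd, ← ZMod.intCast_zmod_eq_zero_iff_dvd]
    simpa [χ] using congrArg toAdd hg
  refine ⟨⟨(g, ofAdd (-k)), ?_⟩, rfl⟩
  rw [MonoidHom.mem_ker, map_mk_eq_mul_zpow]
  apply toAdd.injective
  simp [hk, ← hd]
  ring

theorem exists_mulEquiv_freeGroup_fin_ker [IsFreeGroup G] [Group.FG G]
    (hz : φ (1, ofAdd 1) ≠ 1) : ∃ m : ℕ, Nonempty (φ.ker ≃* FreeGroup (Fin m)) := by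
  have := finiteIndex_range_fst_comp_ker_subtype φ hz
  obtain ⟨m, ⟨e⟩⟩ := IsFreeGroup.exists_mulEquiv_freeGroup_fin
    ((MonoidHom.fst G _).comp φ.ker.subtype).range
  exact ⟨m, ⟨(MonoidHom.ofInjective (injective_fst_comp_ker_subtype φ hz)).trans e⟩⟩

end ProdInt

noncomputable def shift : Multiplicative ℤ →* MulAut (Multiplicative (ℤ →₀ ℤ)) where
  toFun k := AddEquiv.toMultiplicative (Finsupp.domCongr (Equiv.addRight (toAdd k)))
  map_one' := by ext; simp [pull_end]
  map_mul' a b := by ext; simp [pull_end, add_right_comm]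

@[simp]
theorem toAdd_shift_apply (k : Multiplicative ℤ) (f : Multiplicative (ℤ →₀ ℤ)) (x : ℤ) :
    toAdd (shift k f) x = toAdd f (x - toAdd k) := by
  simp [shift, sub_eq_add_neg]

@[simp]
theorem toAdd_shift_symm_apply (k : Multiplicative ℤ) (f : Multiplicative (ℤ →₀ ℤ)) (x : ℤ) :
    toAdd ((shift k).symm f) x = toAdd f (x + toAdd k) := by
  simp [shift]

/-- The wreath product `ℤ ≀ ℤ`, with base group `ℤ[ℤ]` written as `ℤ →₀ ℤ`. -/
abbrev IntWreath := Multiplicative (ℤ →₀ ℤ) ⋊[shift] Multiplicative ℤ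

theorem SemidirectProduct.conj_of_right_eq_one {N G : Type*} [CommGroup N] [Group G]
    {φ : G →* MulAut N} (a b : N ⋊[φ] G) (hb : b.right = 1) :
    a * b * a⁻¹ = inl (φ a.right b.left) := by
  nth_rw 1 [← inl_left_mul_inr_right a, ← inl_left_mul_inr_right b, hb, map_one, mul_one]
  rw [mul_assoc, mul_assoc, ← mul_assoc (inr _), ← mul_assoc]
  ext <;> simp [mul_comm]

section IntWreath

variable {F : Type*} [Group F] (Φ : F →* IntWreath)

noncomputable def leftHomOnKer : (rightHom.comp Φ).ker →* Multiplicative (ℤ →₀ ℤ) where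
  toFun x := (Φ x).left
  map_one' := by simp
  map_mul' x y := by
    have hx : (Φ x).right = 1 := x.2
    simp [mul_left, hx]

theorem not_fg_ker_rightHom_comp (hsurj : Function.Surjective (rightHom.comp Φ)) {u : F}
    (hu : (Φ u).right = 1) (hu' : (Φ u).left ≠ 1) : ¬ Group.FG (rightHom.comp Φ).ker := by
  intro hFG
  obtain ⟨s, hs⟩ := Finsupp.exists_finset_forall_support_subset_of_fg (leftHomOnKer Φ)
  obtain ⟨x, hx⟩ : ∃ x, toAdd (Φ u).left x ≠ 0 := by
    by_contra! h
    exact hu' (toAdd.injective (Finsupp.ext h))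
  obtain ⟨t, ht⟩ := hsurj (ofAdd 1)
  have hconj (q : ℤ) : Φ (t ^ q * u * (t ^ q)⁻¹) = inl (shift (ofAdd q) (Φ u).left) := by
    have : (Φ (t ^ q)).right = ofAdd q :=
      (map_zpow (rightHom.comp Φ) t q).trans (by rw [ht, ← ofAdd_zsmul, smul_eq_mul, mul_one])
    rw [map_mul, map_mul, map_inv, conj_of_right_eq_one _ _ hu, this]
  have hmem (q : ℤ) : t ^ q * u * (t ^ q)⁻¹ ∈ (rightHom.comp Φ).ker := by
    simp [MonoidHom.mem_ker, hconj]
  have hxs (q : ℤ) : x + q ∈ s := hs ⟨_, hmem q⟩ (by simpa [leftHomOnKer, hconj] using hx)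
  exact Set.infinite_univ (s.finite_toSet.subset fun y _ ↦ by simpa using hxs (y - x))

end IntWreath

theorem FreeGroup.exists_intWreath_lift_left_ne_one {α : Type*} [Nontrivial α]
    (ψ : FreeGroup α →* Multiplicative ℤ) :
    ∃ Φ : FreeGroup α →* IntWreath, rightHom.comp Φ = ψ ∧
      ∃ u, (Φ u).right = 1 ∧ (Φ u).left ≠ 1 := by
  classical
  obtain ⟨a, b, hab⟩ := exists_pair_ne α
  let Φ (c : α → ℤ →₀ ℤ) : FreeGroup α →* IntWreath :=
    FreeGroup.lift fun i ↦ inl (ofAdd (c i)) * inr (ψ (of i))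
  have hΦ (c : α → ℤ →₀ ℤ) : rightHom.comp (Φ c) = ψ := FreeGroup.ext_hom _ _ fun i ↦ by simp [Φ]
  by_cases hb : ψ (of b) = 1
  · refine ⟨Φ (Pi.single b (.single 0 1)), hΦ _, of b, by simpa [Φ] using hb, ?_⟩
    simp [Φ]
  · refine ⟨Φ (Pi.single a (.single 0 1)), hΦ _, of a * of b * (of a)⁻¹ * (of b)⁻¹, ?_, ?_⟩
    · simp [Φ, mul_comm]
    · -- the base coordinate of the commutator is `δ₀ - δ_{-ψ b}`, which is `1` at `0`
      have hb' : toAdd (ψ (of b)) ≠ 0 := toAdd_eq_zero.not.mpr hb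
      intro h
      have := congrArg (fun f : Multiplicative (ℤ →₀ ℤ) ↦ toAdd f 0) h
      simp [Φ, mul_left, inv_left, hab.symm, Finsupp.single_apply] at this
      split_ifs at this <;> omega

theorem stmt_10_general (n : ℕ)
    (φ : FreeGroup (Fin n) × Multiplicative ℤ →* Multiplicative ℤ)
    (hsurj : Function.Surjective φ) :
    (φ (1, Multiplicative.ofAdd 1) ≠ 1 →
      ∃ m : ℕ, Nonempty (φ.ker ≃* FreeGroup (Fin m))) ∧
    (φ (1, Multiplicative.ofAdd 1) = 1 → 2 ≤ n → ¬ Group.FG φ.ker) := by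
  refine ⟨exists_mulEquiv_freeGroup_fin_ker φ, fun hz hn ↦ ?_⟩
  have : Nontrivial (Fin n) := Fin.nontrivial_iff_two_le.mpr hn
  obtain ⟨Φ, hΦ, u, hu, hu'⟩ :=
    FreeGroup.exists_intWreath_lift_left_ne_one (φ.comp (MonoidHom.inl _ _))
  have hφ : rightHom.comp (Φ.comp (MonoidHom.fst _ _)) = φ := by
    rw [eq_comp_fst_of_map_one_ofAdd_one φ hz, ← hΦ]
    rfl
  rw [← hφ] at hsurj ⊢
  exact not_fg_ker_rightHom_comp _ hsurj (u := (u, 1)) hu hu'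

/-- Let `G = F_n × ℤ`, `z` a generator of the `ℤ` factor, and `φ : G → ℤ` a
surjective homomorphism. If `φ(z) ≠ 0` then `ker φ` is a finitely generated
free group; if `φ(z) = 0` and `n ≥ 2` then `ker φ` is not finitely generated. -/
theorem stmt_10 (n : ℕ) (hn : 1 ≤ n)
    (φ : FreeGroup (Fin n) × Multiplicative ℤ →* Multiplicative ℤ)
    (hsurj : Function.Surjective φ) :
    (φ (1, Multiplicative.ofAdd 1) ≠ 1 →
      ∃ m : ℕ, Nonempty (φ.ker ≃* FreeGroup (Fin m))) ∧
    (φ (1, Multiplicative.ofAdd 1) = 1 → 2 ≤ n → ¬ Group.FG φ.ker) :=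
  stmt_10_general n φ hsurj
end

section
/- Let F be a free group of rank n ≥ 2 and let N ⊴ F be a nontrivial normal subgroup of infinite index. Then N is not finitely generated. -/
/-! A finitely generated subgroup `H = ⟨S⟩` of a free group is quasiconvex: every prefix of the
reduced word of an element of `H` lies within distance `max |s|` of `H`, since a prefix of the
reduced word of `a * b` is a prefix of `a` or `a` times a prefix of `b`. If `N` is moreover normal
and contains some `w ≠ 1`, then for every `g` a conjugate `(g c) w (g c)⁻¹ ∈ N`, with `c` a letter
chosen (using rank `≥ 2`) so that nothing cancels, has reduced word starting with that of `g`.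
So every `g` is within bounded distance of `N`: each coset `gN = Ng` has a representative of
bounded length, and there are only finitely many of those. -/

namespace FreeGroup

variable {α : Type*}

theorem isReduced_append {L₁ L₂ : List (α × Bool)} :
    IsReduced (L₁ ++ L₂) ↔ IsReduced L₁ ∧ IsReduced L₂ ∧
      ∀ a ∈ L₁.getLast?, ∀ b ∈ L₂.head?, a.1 = b.1 → a.2 = b.2 :=
  List.isChain_append

theorem letter_rel_iff_ne {x y : α × Bool} : (x.1 = y.1 → x.2 = y.2) ↔ x ≠ (y.1, !y.2) := by
  rcases x with ⟨x₁, x₂⟩; rcases y with ⟨y₁, y₂⟩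
  cases x₂ <;> cases y₂ <;> simp

theorem letter_ne_inv_comm {x y : α × Bool} : x ≠ (y.1, !y.2) ↔ y ≠ (x.1, !x.2) := by
  rcases x with ⟨x₁, x₂⟩; rcases y with ⟨y₁, y₂⟩
  cases x₂ <;> cases y₂ <;> simp [eq_comm]

theorem exists_letter_ne [DecidableEq α] [Nontrivial α] (x y z : α × Bool) :
    ∃ c : α × Bool, c ≠ x ∧ c ≠ y ∧ c ≠ z := by
  obtain ⟨a, b, hab⟩ := exists_pair_ne α
  have hcard : ({x, y, z} : Finset (α × Bool)).card <
      (({a, b} : Finset α) ×ˢ (Finset.univ : Finset Bool)).card := by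
    rw [Finset.card_product, Finset.card_pair hab, Finset.card_univ, Fintype.card_bool]
    exact Finset.card_le_three.trans_lt (by norm_num)
  obtain ⟨c, -, hc⟩ := Finset.exists_mem_notMem_of_card_lt_card hcard
  simp only [Finset.mem_insert, Finset.mem_singleton, not_or] at hc
  exact ⟨c, hc⟩

variable [DecidableEq α]

theorem reduce_append_of_isReduced {L₁ L₂ : List (α × Bool)} (h₁ : IsReduced L₁)
    (h₂ : IsReduced L₂) :
    ∃ p t q, L₁ = p ++ t ∧ L₂ = invRev t ++ q ∧ reduce (L₁ ++ L₂) = p ++ q := by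
  induction L₁ with
  | nil => exact ⟨[], [], L₂, rfl, rfl, h₂.reduce_eq⟩
  | cons x L₁ ih =>
    obtain ⟨p, t, q, rfl, rfl, hpq⟩ := ih (h₁.infix ⟨[x], [], by simp⟩)
    have hq : IsReduced q := h₂.infix ⟨invRev t, [], by simp⟩
    rw [List.cons_append, ← reduce_cons_reduce, hpq]
    rcases p with _ | ⟨y, p⟩
    · rcases q with _ | ⟨y, q⟩
      · exact ⟨[x], t, [], rfl, by simp, rfl⟩
      · by_cases hxy : x.1 = y.1 ∧ x.2 = !y.2
        · refine ⟨[], x :: t, q, rfl, ?_, ?_⟩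
          · have hy : y = (x.1, !x.2) := Prod.ext hxy.1.symm (by simp [hxy.2])
            simp [invRev, hy]
          · rw [List.nil_append, reduce.cons, hq.reduce_eq]; simp [hxy]
        · refine ⟨[x], t, y :: q, rfl, rfl, ?_⟩
          rw [List.nil_append, reduce.cons, hq.reduce_eq]; simp [hxy]
    · refine ⟨x :: y :: p, t, q, rfl, rfl, ?_⟩
      have hpq' : IsReduced (y :: p ++ q) := hpq ▸ isReduced_iff_reduce_eq.mpr reduce.idem
      exact (IsReduced.append_overlap (L₁ := [x]) (h₁.infix ⟨[], t, rfl⟩) hpq'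
        (List.cons_ne_nil _ _)).reduce_eq

theorem exists_toWord_mul (a b : FreeGroup α) :
    ∃ p t q, a.toWord = p ++ t ∧ b.toWord = invRev t ++ q ∧ (a * b).toWord = p ++ q := by
  rw [toWord_mul]
  exact reduce_append_of_isReduced isReduced_toWord isReduced_toWord

/-- The vertices of the geodesic from `1` to `g` in the Cayley tree. -/
def prefixes (g : FreeGroup α) : Set (FreeGroup α) :=
  {v | ∃ p, p <+: g.toWord ∧ mk p = v}

theorem norm_le_of_mem_prefixes {g v : FreeGroup α} (hv : v ∈ prefixes g) : norm v ≤ norm g := by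
  obtain ⟨p, hp, rfl⟩ := hv
  exact norm_mk_le.trans hp.length_le

theorem mem_prefixes_mul {a b v : FreeGroup α} (hv : v ∈ prefixes (a * b)) :
    v ∈ prefixes a ∨ ∃ v' ∈ prefixes b, v = a * v' := by
  obtain ⟨p, ⟨s, hps⟩, rfl⟩ := hv
  obtain ⟨P, t, Q, ha, hb, hab⟩ := exists_toWord_mul a b
  rw [hab] at hps
  rcases List.append_eq_append_iff.mp hps with ⟨m, hP, -⟩ | ⟨m, rfl, hQ⟩
  · refine .inl ⟨p, ?_, rfl⟩
    rw [ha, hP, List.append_assoc]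
    exact List.prefix_append _ _
  · have hm : invRev t ++ m <+: b.toWord := by
      rw [hb, hQ, ← List.append_assoc]
      exact List.prefix_append _ _
    refine .inr ⟨mk (invRev t ++ m), ⟨_, hm, rfl⟩, ?_⟩
    rw [← mk_toWord (x := a), ha, ← mul_mk, ← mul_mk, ← mul_mk, ← inv_mk]
    group

theorem mem_prefixes_inv {g v : FreeGroup α} (hv : v ∈ prefixes g⁻¹) :
    ∃ v' ∈ prefixes g, v = g⁻¹ * v' := by
  obtain ⟨p, ⟨s, hps⟩, rfl⟩ := hv
  rw [toWord_inv] at hps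
  have hg : g.toWord = invRev s ++ invRev p := by
    rw [← invRev_invRev (L₁ := g.toWord), ← hps, invRev_append]
  refine ⟨mk (invRev s), ⟨_, hg ▸ List.prefix_append _ _, rfl⟩, ?_⟩
  rw [← mk_toWord (x := g), hg, ← mul_mk, mul_inv_rev, inv_mul_cancel_right, inv_mk,
    invRev_invRev]

theorem exists_mem_closure_norm_inv_mul_le {S : Set (FreeGroup α)} {K : ℕ}
    (hS : ∀ s ∈ S, norm s ≤ K) {u v : FreeGroup α} (hu : u ∈ Subgroup.closure S)
    (hv : v ∈ prefixes u) : ∃ h ∈ Subgroup.closure S, norm (h⁻¹ * v) ≤ K := by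
  induction hu using Subgroup.closure_induction generalizing v with
  | mem s hs =>
    exact ⟨1, one_mem _, by simpa using (norm_le_of_mem_prefixes hv).trans (hS s hs)⟩
  | one =>
    exact ⟨1, one_mem _, by simpa using (norm_le_of_mem_prefixes hv).trans (Nat.zero_le K)⟩
  | mul x y hx hy ihx ihy =>
    rcases mem_prefixes_mul hv with hv | ⟨v', hv', rfl⟩
    · exact ihx hv
    · obtain ⟨h, hh, hle⟩ := ihy hv'
      exact ⟨x * h, mul_mem hx hh, by rwa [mul_inv_rev, mul_assoc, inv_mul_cancel_left]⟩
  | inv x hx ihx =>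
    obtain ⟨v', hv', rfl⟩ := mem_prefixes_inv hv
    obtain ⟨h, hh, hle⟩ := ihx hv'
    exact ⟨x⁻¹ * h, mul_mem (inv_mem hx) hh,
      by rwa [mul_inv_rev, mul_assoc, inv_mul_cancel_left]⟩

theorem toWord_mul_of_isReduced {a b : FreeGroup α} (h : IsReduced (a.toWord ++ b.toWord)) :
    (a * b).toWord = a.toWord ++ b.toWord := by
  rw [toWord_mul, h.reduce_eq]

theorem toWord_conj {c w : FreeGroup α} (hw : w ≠ 1) (h₁ : IsReduced (c.toWord ++ w.toWord))
    (h₂ : IsReduced (w.toWord ++ c⁻¹.toWord)) :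
    (c * w * c⁻¹).toWord = c.toWord ++ w.toWord ++ c⁻¹.toWord := by
  have h := h₁.append_overlap h₂ (by rwa [Ne, toWord_eq_nil_iff])
  rw [toWord_mul_of_isReduced (by rwa [toWord_mul_of_isReduced h₁]), toWord_mul_of_isReduced h₁]

theorem exists_isPrefix_toWord_conj [Nontrivial α] (g : FreeGroup α) {w : FreeGroup α}
    (hw : w ≠ 1) : ∃ c, g.toWord <+: (g * c * w * (g * c)⁻¹).toWord := by
  rcases List.eq_nil_or_concat g.toWord with hg | ⟨γ, z, hg⟩
  · exact ⟨1, by simp [hg]⟩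
  have hne : w.toWord ≠ [] := by rwa [Ne, toWord_eq_nil_iff]
  set a := w.toWord.head hne
  -- `x` must cancel neither the last letter of `g` nor the first of `w`, and `x⁻¹` must not
  -- cancel the last letter of `w`: three exclusions among the `≥ 4` letters.
  obtain ⟨x, hxz, hxa, hxb⟩ := exists_letter_ne (z.1, !z.2) (a.1, !a.2) (w.toWord.getLast hne)
  have hgx : (g * mk [x]).toWord = g.toWord ++ [x] := by
    refine toWord_mul_of_isReduced ?_
    rw [toWord_mk, reduce_singleton]
    refine isReduced_append.mpr ⟨isReduced_toWord, .singleton, ?_⟩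
    simpa [hg, letter_rel_iff_ne] using letter_ne_inv_comm.mp hxz
  refine ⟨mk [x], ?_⟩
  rw [toWord_conj hw ?_ ?_, hgx, List.append_assoc, List.append_assoc]
  · exact List.prefix_append _ _
  · refine isReduced_append.mpr ⟨hgx ▸ isReduced_toWord, isReduced_toWord, ?_⟩
    simpa [hgx, List.head?_eq_some_head hne, letter_rel_iff_ne] using hxa
  · refine isReduced_append.mpr ⟨isReduced_toWord, isReduced_toWord, ?_⟩
    rw [toWord_inv, hgx, invRev_append]
    simpa [List.getLast?_eq_some_getLast hne, invRev, letter_rel_iff_ne] using hxb.symm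

theorem exists_norm_le_mk_eq [Nontrivial α] {N : Subgroup (FreeGroup α)} [N.Normal]
    {S : Set (FreeGroup α)} (hS : Subgroup.closure S = N) {K : ℕ} (hK : ∀ s ∈ S, norm s ≤ K)
    (hN : N ≠ ⊥) (g : FreeGroup α) :
    ∃ k : FreeGroup α, norm k ≤ K ∧ (k : FreeGroup α ⧸ N) = g := by
  obtain ⟨w, hwN, hw⟩ := N.bot_or_exists_ne_one.resolve_left hN
  obtain ⟨c, hc⟩ := exists_isPrefix_toWord_conj g hw
  have hconj : g * c * w * (g * c)⁻¹ ∈ Subgroup.closure S :=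
    hS ▸ ‹N.Normal›.conj_mem w hwN (g * c)
  obtain ⟨h, hh, hle⟩ := exists_mem_closure_norm_inv_mul_le hK hconj ⟨g.toWord, hc, mk_toWord⟩
  rw [hS] at hh
  exact ⟨h⁻¹ * g, hle, by simp [(QuotientGroup.eq_one_iff h).mpr hh]⟩

theorem finite_setOf_norm_le [Finite α] (K : ℕ) : {g : FreeGroup α | norm g ≤ K}.Finite :=
  (List.finite_length_le (α × Bool) K).preimage toWord_injective.injOn

theorem index_ne_zero_of_fg_of_normal [Finite α] [Nontrivial α] {N : Subgroup (FreeGroup α)}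
    [N.Normal] (hfg : N.FG) (hN : N ≠ ⊥) : N.index ≠ 0 := by
  obtain ⟨S, hS⟩ := hfg
  have hfin : (Set.univ : Set (FreeGroup α ⧸ N)).Finite := by
    refine ((finite_setOf_norm_le (S.sup norm)).image QuotientGroup.mk).subset fun q _ => ?_
    obtain ⟨g, rfl⟩ := QuotientGroup.mk_surjective q
    exact exists_norm_le_mk_eq hS (fun s hs => Finset.le_sup hs) hN g
  have := Set.finite_univ_iff.mp hfin
  exact Subgroup.index_ne_zero_of_finite

end FreeGroup

/-- A nontrivial normal subgroup of infinite index in a free group of rank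
`n ≥ 2` is not finitely generated. -/
theorem stmt_16 (n : ℕ) (hn : 2 ≤ n) (N : Subgroup (FreeGroup (Fin n)))
    [N.Normal] (hN : N ≠ ⊥) (hidx : N.index = 0) :
    ¬ Group.FG N := fun hFG =>
  have : Nontrivial (Fin n) := Fin.nontrivial_iff_two_le.mpr hn
  FreeGroup.index_ne_zero_of_fg_of_normal ((Group.fg_iff_subgroup_fg N).mp hFG) hN hidx
end
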